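/- arXiv:0812.4835 — 7 statements merged into one kernel-verified Lean document; each statement's English description precedes it below -/
import Mathlib

section
/- Under the Protocol 2 model: if an attack (U_1,…,U_{N+1}) satisfies the no-error conditions (T) and (Z), then there exists a family of unit vectors F : (Fin N → Bool) → EuclideanSpace ℂ (Fin d) such that for every bitstring i and every m : Finset (Fin N), the final state Ψ_m(δ_i) equals the elementary tensor F i ⊗ δ_i ⊗ δ_{i∧m}; concretely, its coefficient at basis index (a,j,b) equals (F i) a when j = i and b = i∧m, and equals 0 otherwise. -/
/-!
Protocol 2 model (semi-quantum key distribution, measure-resend):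
see Boyer, Gelles, Kenigsberg, Mor, "Semi-Quantum Key Distribution".
-/

namespace SQKD2

/-- Bitstrings of length `N`. -/
abbrev Bits (N : ℕ) := Fin N → Bool

/-- Index type of the global state space: Eve's probe, the `N` travelling qubits,
Bob's register. -/
abbrev Idx (N d : ℕ) := Fin d × Bits N × Bits N

/-- The global state space. -/
abbrev H (N d : ℕ) := EuclideanSpace ℂ (Idx N d)

/-- The mask `i ∧ m`. -/
def mask {N : ℕ} (i : Bits N) (m : Finset (Fin N)) : Bits N :=
  fun k => if k ∈ m then i k else false

/-- The underlying function of Bob's measure-resend permutation `M_k` on basis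
indices: `(a, j, b) ↦ (a, j, b')` where `b'` agrees with `b` except
`b' k = b k XOR j k`. -/
def mPermFun {N d : ℕ} (k : Fin N) : Idx N d → Idx N d :=
  fun p => (p.1, p.2.1, Function.update p.2.2 k (xor (p.2.2 k) (p.2.1 k)))

lemma mPermFun_involutive {N d : ℕ} (k : Fin N) :
    Function.Involutive (mPermFun (N := N) (d := d) k) := by
  rintro ⟨a, j, b⟩
  simp only [mPermFun]
  refine Prod.ext rfl (Prod.ext rfl ?_)
  funext l
  by_cases hl : l = k
  · subst hl
    simp [Bool.xor_assoc]
  · simp [Function.update_of_ne hl]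

/-- Bob's measure-resend permutation of basis indices, as an equivalence. -/
def mPerm {N d : ℕ} (k : Fin N) : Idx N d ≃ Idx N d :=
  (mPermFun_involutive (N := N) (d := d) k).toPerm _

/-- Bob's measure-resend unitary `M_k`. -/
noncomputable def M {N d : ℕ} (k : Fin N) : H N d ≃ₗᵢ[ℂ] H N d :=
  LinearIsometryEquiv.piLpCongrLeft 2 ℂ ℂ (mPerm (N := N) (d := d) k)

/-- A unitary of the global space acts only on the first two factors (Eve's
probe and the travelling qubits) if its matrix elements in the standard basis
are of the form `c((a',j'),(a,j))` when `b' = b` and vanish otherwise. -/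
def ActsOnFirstTwo {N d : ℕ} (V : H N d ≃ₗᵢ[ℂ] H N d) : Prop :=
  ∃ c : (Fin d × Bits N) → (Fin d × Bits N) → ℂ,
    ∀ (a : Fin d) (j b : Bits N) (a' : Fin d) (j' b' : Bits N),
      V (EuclideanSpace.single (a, j, b) 1) (a', j', b') =
        if b' = b then c (a', j') (a, j) else 0

/-- `W_m = U_{N+1} ∘ A_N ∘ U_N ∘ ⋯ ∘ A_1 ∘ U_1`, where `A_k = M_k` if `k ∈ m`
and the identity otherwise.  Here `U t` for `t : Fin (N+1)` is `U_{t+1}`. -/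
noncomputable def W {N d : ℕ} (U : Fin (N + 1) → (H N d ≃ₗᵢ[ℂ] H N d)) (m : Finset (Fin N)) :
    H N d ≃ₗᵢ[ℂ] H N d :=
  ((List.finRange N).foldl
    (fun acc k => (acc.trans (U k.castSucc)).trans
      (if k ∈ m then M k else LinearIsometryEquiv.refl ℂ (H N d)))
    (LinearIsometryEquiv.refl ℂ (H N d))).trans (U (Fin.last N))

/-- The initial state `ε₀ ⊗ φ ⊗ δ_0` for Alice's input `φ`. -/
noncomputable def init {N d : ℕ} (hd : 0 < d) (φ : EuclideanSpace ℂ (Bits N)) : H N d :=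
  WithLp.toLp 2 (fun p : Idx N d => if p.1 = (⟨0, hd⟩ : Fin d) ∧ p.2.2 = (fun _ => false) then φ p.2.1 else 0)

/-- The final state `Ψ_m(φ) = W_m (ε₀ ⊗ φ ⊗ δ_0)`. -/
noncomputable def Psi {N d : ℕ} (U : Fin (N + 1) → (H N d ≃ₗᵢ[ℂ] H N d)) (hd : 0 < d)
    (m : Finset (Fin N)) (φ : EuclideanSpace ℂ (Bits N)) : H N d :=
  W U m (init hd φ)

/-- Condition (T): no error on TEST bits. -/
def CondT {N d : ℕ} (U : Fin (N + 1) → (H N d ≃ₗᵢ[ℂ] H N d)) (hd : 0 < d) : Prop :=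
  ∀ (i : Bits N) (m : Finset (Fin N)) (a : Fin d) (j b : Bits N),
    b ≠ mask i m → Psi U hd m (EuclideanSpace.single i 1) (a, j, b) = 0

/-- Condition (Z): no error on Z-CTRL bits. -/
def CondZ {N d : ℕ} (U : Fin (N + 1) → (H N d ≃ₗᵢ[ℂ] H N d)) (hd : 0 < d) : Prop :=
  ∀ (i : Bits N) (m : Finset (Fin N)) (a : Fin d) (j b : Bits N),
    j ≠ i → Psi U hd m (EuclideanSpace.single i 1) (a, j, b) = 0

/-- Condition (X): no error on X-CTRL bits. -/
def CondX {N d : ℕ} (U : Fin (N + 1) → (H N d ≃ₗᵢ[ℂ] H N d)) (hd : 0 < d) : Prop :=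
  ∀ (m : Finset (Fin N)) (k : Fin N), k ∉ m →
    ∀ i : Bits N, i k = false →
      ∀ (a : Fin d) (j b : Bits N),
        Psi U hd m (((Real.sqrt 2 : ℂ))⁻¹ •
            (EuclideanSpace.single i 1 +
              EuclideanSpace.single (Function.update i k true) 1)) (a, j, b) =
          Psi U hd m (((Real.sqrt 2 : ℂ))⁻¹ •
            (EuclideanSpace.single i 1 +
              EuclideanSpace.single (Function.update i k true) 1))
            (a, Function.update j k (!(j k)), b)

/-!
Sum the coefficients of a state over Bob's register `b`. An attack unitary acts on this register
sum through its own matrix `c`, and `M_k` only permutes `b` for fixed `(a, j)`, so it leaves the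
register sum unchanged. Hence the register sum of `Ψ_m(δ_i)` does not depend on `m`. By (T) and
(Z), `Ψ_m(δ_i)` is supported on the indices `(a, i, i ∧ m)`, so its coefficients there are the
register sum, i.e. those of `Ψ_∅(δ_i)`; the unit norm comes from `W_∅` being an isometry.
-/

lemma _root_.EuclideanSpace.apply_eq_sum_mul_single {𝕜 ι κ F : Type*} [RCLike 𝕜] [Fintype ι]
    [DecidableEq ι] [FunLike F (EuclideanSpace 𝕜 ι) (EuclideanSpace 𝕜 κ)]
    [LinearMapClass F 𝕜 (EuclideanSpace 𝕜 ι) (EuclideanSpace 𝕜 κ)]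
    (V : F) (x : EuclideanSpace 𝕜 ι) (q : κ) :
    V x q = ∑ p, x p * V (EuclideanSpace.single p 1) q := by
  conv_lhs => rw [← (EuclideanSpace.basisFun ι 𝕜).sum_repr x]
  simp [EuclideanSpace.basisFun_apply]

lemma _root_.EuclideanSpace.norm_eq_of_apply_eq_ite {𝕜 α β : Type*} [RCLike 𝕜] [Fintype α]
    [Fintype β] [DecidableEq β] {x : EuclideanSpace 𝕜 (α × β)} {v : EuclideanSpace 𝕜 α} {q : β}
    (h : ∀ a p, x (a, p) = if p = q then v a else 0) : ‖x‖ = ‖v‖ := by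
  simp [EuclideanSpace.norm_eq, Fintype.sum_prod_type, h, apply_ite]

section
variable {N d : ℕ}

def sumRegister (x : H N d) (q : Fin d × Bits N) : ℂ := ∑ b, x (q.1, q.2, b)

lemma sumRegister_eq_apply {x : H N d} {b₀ : Bits N} (hx : ∀ a j b, b ≠ b₀ → x (a, j, b) = 0)
    (a : Fin d) (j : Bits N) : sumRegister x (a, j) = x (a, j, b₀) :=
  Finset.sum_eq_single b₀ (fun b _ hb => hx a j b hb) (by simp)

lemma sumRegister_map_eq_sum_mul {V : H N d ≃ₗᵢ[ℂ] H N d}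
    {c : (Fin d × Bits N) → (Fin d × Bits N) → ℂ}
    (hc : ∀ (a : Fin d) (j b : Bits N) (a' : Fin d) (j' b' : Bits N),
      V (EuclideanSpace.single (a, j, b) 1) (a', j', b') =
        if b' = b then c (a', j') (a, j) else 0) (x : H N d) (q : Fin d × Bits N) :
    sumRegister (V x) q = ∑ p, c q p * sumRegister x p := by
  obtain ⟨a', j'⟩ := q
  simp only [sumRegister, EuclideanSpace.apply_eq_sum_mul_single V x]
  rw [Finset.sum_comm]
  simp only [Fintype.sum_prod_type, hc, mul_ite, mul_zero, Finset.sum_ite_eq', Finset.mem_univ,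
    if_true, Finset.mul_sum]
  simp only [mul_comm]

lemma ActsOnFirstTwo.sumRegister_congr {V : H N d ≃ₗᵢ[ℂ] H N d} (hV : ActsOnFirstTwo V)
    {x y : H N d} (h : sumRegister x = sumRegister y) : sumRegister (V x) = sumRegister (V y) := by
  obtain ⟨c, hc⟩ := hV
  funext q
  rw [sumRegister_map_eq_sum_mul hc, sumRegister_map_eq_sum_mul hc, h]

lemma sumRegister_M (k : Fin N) (x : H N d) : sumRegister (M k x) = sumRegister x := by
  funext q
  have hinv : Function.Involutive fun b : Bits N => Function.update b k (xor (b k) (q.2 k)) :=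
    fun b => by simp
  exact Fintype.sum_bijective _ hinv.bijective _ _ fun b => rfl

lemma sumRegister_W {U : Fin (N + 1) → (H N d ≃ₗᵢ[ℂ] H N d)} (hU : ∀ t, ActsOnFirstTwo (U t))
    (m m' : Finset (Fin N)) (x : H N d) : sumRegister (W U m x) = sumRegister (W U m' x) := by
  let R (e e' : H N d ≃ₗᵢ[ℂ] H N d) : Prop :=
    ∀ x y, sumRegister x = sumRegister y → sumRegister (e x) = sumRegister (e' y)
  have hA (m : Finset (Fin N)) (k : Fin N) (x : H N d) :
      sumRegister ((if k ∈ m then M k else .refl ℂ (H N d)) x) = sumRegister x := by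
    split_ifs
    exacts [sumRegister_M k x, rfl]
  simp only [W, LinearIsometryEquiv.trans_apply]
  refine (hU _).sumRegister_congr
    (List.foldl_rel (r := R) (fun _ _ h => h) (fun k _ e e' he x y h => ?_) x x rfl)
  simp only [LinearIsometryEquiv.trans_apply, hA]
  exact (hU _).sumRegister_congr (he x y h)

lemma norm_init (hd : 0 < d) (φ : EuclideanSpace ℂ (Bits N)) : ‖init hd φ‖ = ‖φ‖ := by
  simp [init, EuclideanSpace.norm_eq, Fintype.sum_prod_type, apply_ite, ite_and]

end

theorem protocol2_final_state_general (N d : ℕ) (hd : 0 < d)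
    (U : Fin (N + 1) → (H N d ≃ₗᵢ[ℂ] H N d))
    (hU : ∀ t, ActsOnFirstTwo (U t))
    (hT : CondT U hd) (hZ : CondZ U hd) :
    ∃ F : Bits N → EuclideanSpace ℂ (Fin d),
      (∀ i, ‖F i‖ = 1) ∧
      ∀ (i : Bits N) (m : Finset (Fin N)) (a : Fin d) (j b : Bits N),
        Psi U hd m (EuclideanSpace.single i 1) (a, j, b) =
          if j = i ∧ b = mask i m then F i a else 0 := by
  let F (i : Bits N) : EuclideanSpace ℂ (Fin d) :=
    WithLp.toLp 2 fun a => sumRegister (Psi U hd ∅ (EuclideanSpace.single i 1)) (a, i)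
  have hPsi (i : Bits N) (m : Finset (Fin N)) (a : Fin d) (j b : Bits N) :
      Psi U hd m (EuclideanSpace.single i 1) (a, j, b) =
        if j = i ∧ b = mask i m then F i a else 0 := by
    split_ifs with h
    · obtain ⟨rfl, rfl⟩ := h
      rw [← sumRegister_eq_apply (hT j m)]
      exact congrFun (sumRegister_W hU m ∅ _) (a, j)
    · rcases not_and_or.mp h with hj | hb
      exacts [hZ i m a j b hj, hT i m a j b hb]
  refine ⟨F, fun i => ?_, hPsi⟩
  calc ‖F i‖ = ‖Psi U hd ∅ (EuclideanSpace.single i 1)‖ :=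
        (EuclideanSpace.norm_eq_of_apply_eq_ite (q := (i, mask i ∅)) fun a p => by
          simp only [hPsi, Prod.ext_iff]).symm
    _ = 1 := by simp [Psi, norm_init]

/-- If an attack satisfies the no-error conditions (T) and (Z),
then there is a family of unit vectors `F i` of Eve's probe space such that for
every bitstring `i` and every `m`, the final state `Ψ_m(δ_i)` is the elementary
tensor `F i ⊗ δ_i ⊗ δ_{i∧m}`. -/
theorem protocol2_final_state (N d : ℕ) (hN : 1 ≤ N) (hd : 0 < d)
    (U : Fin (N + 1) → (H N d ≃ₗᵢ[ℂ] H N d))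
    (hU : ∀ t, ActsOnFirstTwo (U t))
    (hT : CondT U hd) (hZ : CondZ U hd) :
    ∃ F : Bits N → EuclideanSpace ℂ (Fin d),
      (∀ i, ‖F i‖ = 1) ∧
      ∀ (i : Bits N) (m : Finset (Fin N)) (a : Fin d) (j b : Bits N),
        Psi U hd m (EuclideanSpace.single i 1) (a, j, b) =
          if j = i ∧ b = mask i m then F i a else 0 :=
  protocol2_final_state_general N d hd U hU hT hZ

end SQKD2
end

section
/- Complete robustness of Protocol 2: under the Protocol 2 model, if N ≥ 2 and an attack (U_1,…,U_{N+1}) satisfies the no-error conditions (T), (Z) and (X), then there exists a unit vector f ∈ EuclideanSpace ℂ (Fin d) such that for every input φ ∈ EuclideanSpace ℂ (Fin N → Bool) and every m : Finset (Fin N), the final state is Ψ_m(φ) = Σ_i φ(i) · f ⊗ δ_i ⊗ δ_{i∧m}; concretely, the coefficient of Ψ_m(φ) at any basis index (a,j,b) equals f(a)·φ(j) if b = j∧m and 0 otherwise. In particular Eve's probe state f is independent of the state φ sent by Alice and of Bob's choices m. -/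
/-!
Each `U_t` acts on Eve's probe and the travelling qubits only, so it maps `ψ ⊗ δ_b` to
`ψ' ⊗ δ_b` with `ψ'` independent of Bob's register `b`. Follow a basis input `δ_i` through
the protocol. Just before Bob's measurement of qubit `k` the state is `ψ ⊗ δ_b`; condition (T)
for `m = {k}` forces `ψ` to be supported on "qubit `k` reads `i k`", since the remaining
evolution preserves the register and is injective, so any other component would end up at a
wrong register value. Hence the measurement only writes `i k` into the register, and
`Ψ_m(δ_i) = ψ_i ⊗ δ_{i∧m}` with `ψ_i` independent of `m`. Condition (Z) gives
`ψ_i = g_i ⊗ δ_i`, condition (X) with `m = ∅` gives `g_i = g_{i'}` whenever `i'` is `i` with one bit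
switched on, so all `g_i` equal one unit vector `f`; linearity in `φ` finishes the proof.
-/

theorem apply_eq_apply_false_of_update_true {ι α : Type*} [Fintype ι] [DecidableEq ι]
    {g : (ι → Bool) → α} (hg : ∀ i k, i k = false → g (Function.update i k true) = g i)
    (i : ι → Bool) : g i = g fun _ => false := by
  have key : ∀ s : Finset ι, g (fun l => decide (l ∈ s)) = g fun _ => false := by
    intro s
    induction s using Finset.induction_on with
    | empty => simp
    | insert k s hk ih =>
      rw [← ih, ← hg (fun l => decide (l ∈ s)) k (by simpa using hk)]
      congr 1
      funext l
      by_cases hl : l = k <;> simp [hl]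
  simpa using key {l | i l}

lemma EuclideanSpace.norm_eq_of_apply_eq_ite_s2 {𝕜 α β : Type*} [RCLike 𝕜] [Fintype α] [Fintype β]
    [DecidableEq β] {x : EuclideanSpace 𝕜 (α × β)} {f : EuclideanSpace 𝕜 α} {c₀ : β}
    (h : ∀ a c, x (a, c) = if c = c₀ then f a else 0) : ‖x‖ = ‖f‖ := by
  simp [EuclideanSpace.norm_eq, Fintype.sum_prod_type, h, apply_ite]

namespace SQKD2

variable {N d : ℕ}

abbrev ProbeQubitSpace (N d : ℕ) := EuclideanSpace ℂ (Fin d × Bits N)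

/-- `ψ ⊗ δ_b`. -/
noncomputable def withRegister (ψ : ProbeQubitSpace N d) (b : Bits N) : H N d :=
  WithLp.toLp 2 fun p : Idx N d => if p.2.2 = b then ψ (p.1, p.2.1) else 0

lemma withRegister_apply (ψ : ProbeQubitSpace N d) (b : Bits N) (a : Fin d) (j b' : Bits N) :
    withRegister ψ b (a, j, b') = if b' = b then ψ (a, j) else 0 := rfl

lemma withRegister_eq_zero_iff {ψ : ProbeQubitSpace N d} {b : Bits N} :
    withRegister ψ b = 0 ↔ ψ = 0 := by
  refine ⟨fun h => ?_, fun h => ?_⟩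
  · ext q
    simpa [withRegister_apply] using congr($h (q.1, q.2, b))
  · ext ⟨a, j, b'⟩
    simp [withRegister_apply, h]

lemma withRegister_single (q : Fin d × Bits N) (c : ℂ) (b : Bits N) :
    withRegister (EuclideanSpace.single q c) b = EuclideanSpace.single (q.1, q.2, b) c := by
  ext ⟨a, j, b'⟩
  simp only [withRegister_apply, PiLp.single_apply, Prod.ext_iff]
  split_ifs <;> simp_all

lemma withRegister_eq_sum (ψ : ProbeQubitSpace N d) (b : Bits N) :
    withRegister ψ b = ∑ q, ψ q • EuclideanSpace.single (q.1, q.2, b) 1 := by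
  ext ⟨a, j, b'⟩
  simp [withRegister_apply, Finset.sum_apply, Pi.single_apply, Prod.ext_iff, ite_and,
    Fintype.sum_prod_type]

def PreservesRegister (V : H N d → H N d) : Prop :=
  ∀ ψ : ProbeQubitSpace N d, ∃ ψ' : ProbeQubitSpace N d, ∀ b,
    V (withRegister ψ b) = withRegister ψ' b

lemma preservesRegister_id : PreservesRegister (id : H N d → H N d) :=
  fun ψ => ⟨ψ, fun _ => rfl⟩

lemma PreservesRegister.comp {V V' : H N d → H N d} (hV' : PreservesRegister V')
    (hV : PreservesRegister V) : PreservesRegister (V' ∘ V) := by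
  intro ψ
  obtain ⟨ψ₁, h₁⟩ := hV ψ
  obtain ⟨ψ₂, h₂⟩ := hV' ψ₁
  exact ⟨ψ₂, fun b => by rw [Function.comp_apply, h₁, h₂]⟩

lemma ActsOnFirstTwo.preservesRegister {V : H N d ≃ₗᵢ[ℂ] H N d} (hV : ActsOnFirstTwo V) :
    PreservesRegister V := by
  obtain ⟨c, hc⟩ := hV
  refine fun ψ => ⟨WithLp.toLp 2 fun q => ∑ r, ψ r * c q r, fun b => ?_⟩
  ext ⟨a, j, b'⟩
  rw [withRegister_eq_sum, map_sum, WithLp.ofLp_sum, Finset.sum_apply]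
  by_cases hb : b' = b <;> simp [hc, withRegister_apply, hb]

noncomputable def restrictBit (k : Fin N) (β : Bool) (ψ : ProbeQubitSpace N d) :
    ProbeQubitSpace N d :=
  WithLp.toLp 2 fun q : Fin d × Bits N => if q.2 k = β then ψ q else 0

lemma restrictBit_add_restrictBit_not (k : Fin N) (β : Bool) (ψ : ProbeQubitSpace N d) :
    restrictBit k β ψ + restrictBit k (!β) ψ = ψ := by
  ext q
  cases h : q.2 k <;> cases β <;> simp [restrictBit, h]

lemma M_apply (k : Fin N) (x : H N d) (p : Idx N d) : M k x p = x (mPermFun k p) := by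
  simp [M, mPerm, LinearIsometryEquiv.piLpCongrLeft_apply, Equiv.piCongrLeft'_apply]

lemma update_xor_eq_iff (k : Fin N) (c : Bool) (b b' : Bits N) :
    Function.update b k (xor (b k) c) = b' ↔ b = Function.update b' k (xor (b' k) c) := by
  constructor <;> rintro rfl <;> funext l <;> by_cases hl : l = k <;> simp [hl]

lemma M_withRegister (k : Fin N) (β : Bool) (ψ : ProbeQubitSpace N d) (b : Bits N) :
    M k (withRegister ψ b) =
      withRegister (restrictBit k β ψ) (Function.update b k (xor (b k) β)) +
      withRegister (restrictBit k (!β) ψ) (Function.update b k (xor (b k) (!β))) := by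
  ext ⟨a, j, b'⟩
  rw [M_apply, PiLp.add_apply]
  simp only [mPermFun, withRegister_apply, update_xor_eq_iff, restrictBit]
  rcases Bool.eq_false_or_eq_true (j k) with h | h <;> cases β <;> simp [h]

lemma M_withRegister_of_restrictBit_not_eq_zero {k : Fin N} {β : Bool}
    {ψ : ProbeQubitSpace N d} (hψ : restrictBit k (!β) ψ = 0) (b : Bits N) :
    M k (withRegister ψ b) = withRegister ψ (Function.update b k (xor (b k) β)) := by
  have hβ : restrictBit k β ψ = ψ := by
    simpa [hψ] using restrictBit_add_restrictBit_not k β ψ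
  rw [M_withRegister k β, hβ, hψ, withRegister_eq_zero_iff.2 rfl, add_zero]

@[simp]
lemma mask_empty (i : Bits N) : mask i ∅ = fun _ => false := by
  funext l
  simp [mask]

lemma mask_insert {κ : Fin N} {s : Finset (Fin N)} (hκ : κ ∉ s) (i : Bits N) :
    mask i (insert κ s) = Function.update (mask i s) κ (xor (mask i s κ) (i κ)) := by
  funext l
  by_cases hl : l = κ
  · subst hl
    simp [mask, hκ]
  · simp [mask, hl]

lemma init_single (hd : 0 < d) (i : Bits N) :
    init hd (EuclideanSpace.single i 1) =
      withRegister (EuclideanSpace.single (⟨0, hd⟩, i) 1) fun _ => false := by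
  ext ⟨a, j, b⟩
  simp only [init, withRegister_apply, PiLp.single_apply, Prod.ext_iff]
  split_ifs <;> simp_all

section Evolution

variable (U : Fin (N + 1) → (H N d ≃ₗᵢ[ℂ] H N d)) (m : Finset (Fin N))

noncomputable def evolve (l : List (Fin N)) : H N d ≃ₗᵢ[ℂ] H N d :=
  l.foldl (fun acc k => (acc.trans (U k.castSucc)).trans
      (if k ∈ m then M k else LinearIsometryEquiv.refl ℂ (H N d)))
    (LinearIsometryEquiv.refl ℂ (H N d))

lemma W_eq_evolve : W U m = (evolve U m (List.finRange N)).trans (U (Fin.last N)) := rfl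

lemma evolve_singleton_apply (k : Fin N) (x : H N d) :
    evolve U m [k] x =
      (if k ∈ m then M k else LinearIsometryEquiv.refl ℂ (H N d)) (U k.castSucc x) := rfl

lemma evolve_append_apply (l₁ l₂ : List (Fin N)) (x : H N d) :
    evolve U m (l₁ ++ l₂) x = evolve U m l₂ (evolve U m l₁ x) := by
  have foldl_apply : ∀ (l : List (Fin N)) (acc : H N d ≃ₗᵢ[ℂ] H N d) (y : H N d),
      l.foldl (fun acc k => (acc.trans (U k.castSucc)).trans
        (if k ∈ m then M k else LinearIsometryEquiv.refl ℂ (H N d))) acc y =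
        evolve U m l (acc y) := by
    intro l
    induction l with
    | nil => exact fun _ _ => rfl
    | cons k l ih => exact fun acc y => (ih _ y).trans (ih (evolve U m [k]) (acc y)).symm
  rw [evolve, List.foldl_append]
  exact foldl_apply l₂ _ x

lemma preservesRegister_evolve (hU : ∀ t, ActsOnFirstTwo (U t)) {l : List (Fin N)}
    (hl : ∀ k ∈ l, k ∉ m) : PreservesRegister (evolve U m l) := by
  induction l with
  | nil => exact preservesRegister_id
  | cons k l ih =>
    have hk : ⇑(evolve U m [k]) = U k.castSucc := by
      funext x
      simp [evolve_singleton_apply, hl k List.mem_cons_self]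
    have hsplit : ⇑(evolve U m (k :: l)) = evolve U m l ∘ evolve U m [k] :=
      funext (evolve_append_apply U m [k] l)
    rw [hsplit, hk]
    exact (ih fun k' hk' => hl k' (List.mem_cons_of_mem k hk')).comp (hU _).preservesRegister

end Evolution

lemma restrictBit_not_eq_zero {V : H N d ≃ₗᵢ[ℂ] H N d} (hV : PreservesRegister V) (k : Fin N)
    (β : Bool) (ψ : ProbeQubitSpace N d)
    (hzero : ∀ a j b, b ≠ Function.update (fun _ => false) k β →
      V (M k (withRegister ψ fun _ => false)) (a, j, b) = 0) :
    restrictBit k (!β) ψ = 0 := by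
  obtain ⟨φ, hφ⟩ := hV (restrictBit k β ψ)
  obtain ⟨φ', hφ'⟩ := hV (restrictBit k (!β) ψ)
  have hne : Function.update (fun _ => false) k (!β) ≠ Function.update (fun _ => false) k β := by
    simpa [funext_iff] using ⟨k, by simp⟩
  have hφ'_zero : φ' = 0 := by
    ext ⟨a, j⟩
    have := hzero a j _ hne
    rw [M_withRegister k β, map_add, PiLp.add_apply] at this
    simp only [Bool.false_xor] at this
    rwa [hφ, hφ', withRegister_apply, withRegister_apply, if_neg hne, if_pos rfl, zero_add] at this
  have h := hφ' (Function.update (fun _ => false) k (!β))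
  rwa [hφ'_zero, withRegister_eq_zero_iff.2 rfl, LinearIsometryEquiv.map_eq_zero_iff,
    withRegister_eq_zero_iff] at h

lemma restrictBit_not_eq_zero_of_condT {U : Fin (N + 1) → (H N d ≃ₗᵢ[ℂ] H N d)} {hd : 0 < d}
    (hU : ∀ t, ActsOnFirstTwo (U t)) (hT : CondT U hd) (i : Bits N) {l₁ l₂ : List (Fin N)}
    {κ : Fin N} (hl : l₁ ++ κ :: l₂ = List.finRange N) {ψ : ProbeQubitSpace N d}
    (hψ : U κ.castSucc (evolve U {κ} l₁ (init hd (EuclideanSpace.single i 1))) =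
      withRegister ψ fun _ => false) :
    restrictBit κ (!(i κ)) ψ = 0 := by
  have hκl₂ : κ ∉ l₂ := by
    have hnd := List.nodup_middle.1 (hl ▸ List.nodup_finRange N)
    exact fun h => (List.nodup_cons.1 hnd).1 (List.mem_append_right _ h)
  refine restrictBit_not_eq_zero (V := (evolve U {κ} l₂).trans (U (Fin.last N)))
    ?_ κ (i κ) ψ fun a j b hb => ?_
  · rw [LinearIsometryEquiv.coe_trans]
    exact (hU _).preservesRegister.comp <| preservesRegister_evolve U {κ} hU fun k hk hkκ =>
      hκl₂ (Finset.mem_singleton.1 hkκ ▸ hk)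
  · have hmask : mask i {κ} = Function.update (fun _ => false) κ (i κ) := by
      simpa using mask_insert (Finset.notMem_empty κ) i
    have := hT i {κ} a j b (hmask ▸ hb)
    rwa [Psi, W_eq_evolve, ← hl, LinearIsometryEquiv.trans_apply, ← List.singleton_append,
      evolve_append_apply, evolve_append_apply, evolve_singleton_apply, hψ,
      if_pos (Finset.mem_singleton_self κ)] at this

lemma exists_evolve_init_single_eq {U : Fin (N + 1) → (H N d ≃ₗᵢ[ℂ] H N d)} {hd : 0 < d}
    (hU : ∀ t, ActsOnFirstTwo (U t)) (hT : CondT U hd) (i : Bits N) {l₁ l₂ : List (Fin N)}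
    (hl : l₁ ++ l₂ = List.finRange N) :
    ∃ ψ : ProbeQubitSpace N d, ∀ m, evolve U m l₁ (init hd (EuclideanSpace.single i 1)) =
      withRegister ψ (mask i (m ∩ l₁.toFinset)) := by
  induction l₁ using List.reverseRecOn generalizing l₂ with
  | nil =>
    refine ⟨EuclideanSpace.single (⟨0, hd⟩, i) 1, fun m => ?_⟩
    rw [List.toFinset_nil, Finset.inter_empty, mask_empty]
    exact init_single hd i
  | append_singleton l₁ κ ih =>
    have hl' : l₁ ++ κ :: l₂ = List.finRange N := by simpa using hl
    have hκl₁ : κ ∉ l₁ := fun h =>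
      (List.nodup_cons.1 (List.nodup_middle.1 (hl' ▸ List.nodup_finRange N))).1
        (List.mem_append_left _ h)
    obtain ⟨ψ, hψ⟩ := ih hl'
    obtain ⟨ψ', hψ'⟩ := (hU κ.castSucc).preservesRegister ψ
    have hsupp : restrictBit κ (!(i κ)) ψ' = 0 := by
      refine restrictBit_not_eq_zero_of_condT hU hT i hl' ?_
      rw [hψ, hψ', Finset.singleton_inter_of_notMem (by simpa using hκl₁), mask_empty]
    refine ⟨ψ', fun m => ?_⟩
    rw [evolve_append_apply, evolve_singleton_apply, hψ, hψ']
    by_cases hκ : κ ∈ m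
    · have hinter : m ∩ (l₁ ++ [κ]).toFinset = insert κ (m ∩ l₁.toFinset) := by
        ext k; by_cases hk : k = κ <;> simp [hk, hκ]
      rw [if_pos hκ, M_withRegister_of_restrictBit_not_eq_zero hsupp, hinter,
        mask_insert (by simp [hκl₁])]
    · have hinter : m ∩ (l₁ ++ [κ]).toFinset = m ∩ l₁.toFinset := by
        ext k; by_cases hk : k = κ <;> simp [hk, hκ]
      rw [if_neg hκ, hinter]
      rfl

lemma exists_Psi_single_eq {U : Fin (N + 1) → (H N d ≃ₗᵢ[ℂ] H N d)} {hd : 0 < d}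
    (hU : ∀ t, ActsOnFirstTwo (U t)) (hT : CondT U hd) (i : Bits N) :
    ∃ ψ : ProbeQubitSpace N d, ∀ m,
      Psi U hd m (EuclideanSpace.single i 1) = withRegister ψ (mask i m) := by
  obtain ⟨ψ, hψ⟩ := exists_evolve_init_single_eq hU hT i (List.append_nil _)
  obtain ⟨ψ', hψ'⟩ := (hU (Fin.last N)).preservesRegister ψ
  refine ⟨ψ', fun m => ?_⟩
  rw [Psi, W_eq_evolve, LinearIsometryEquiv.trans_apply, hψ, List.toFinset_finRange,
    Finset.inter_univ, hψ']

section Linearity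

variable (U : Fin (N + 1) → (H N d ≃ₗᵢ[ℂ] H N d)) (m : Finset (Fin N)) (hd : 0 < d)

noncomputable def psiLinearMap : EuclideanSpace ℂ (Bits N) →ₗ[ℂ] H N d where
  toFun := Psi U hd m
  map_add' φ φ' := by
    simp only [Psi, ← map_add]
    congr 1
    ext ⟨a, j, b⟩
    simp only [init, PiLp.add_apply]
    split_ifs <;> simp
  map_smul' c φ := by
    simp only [Psi, RingHom.id_apply, ← map_smul]
    congr 1
    ext ⟨a, j, b⟩
    simp only [init, PiLp.smul_apply]
    split_ifs <;> simp

lemma psiLinearMap_apply (φ : EuclideanSpace ℂ (Bits N)) :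
    psiLinearMap U m hd φ = Psi U hd m φ :=
  rfl

lemma Psi_eq_sum (φ : EuclideanSpace ℂ (Bits N)) :
    Psi U hd m φ = ∑ i, φ i • Psi U hd m (EuclideanSpace.single i 1) := by
  conv_lhs =>
    rw [← (EuclideanSpace.basisFun (Bits N) ℂ).sum_repr φ, ← psiLinearMap_apply, map_sum]
  refine Finset.sum_congr rfl fun i _ => ?_
  rw [map_smul, EuclideanSpace.basisFun_repr, EuclideanSpace.basisFun_apply, psiLinearMap_apply]

end Linearity

lemma exists_Psi_single_apply {U : Fin (N + 1) → (H N d ≃ₗᵢ[ℂ] H N d)} {hd : 0 < d}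
    (hU : ∀ t, ActsOnFirstTwo (U t)) (hT : CondT U hd) (hZ : CondZ U hd) :
    ∃ g : Bits N → Fin d → ℂ, ∀ i m a j b, Psi U hd m (EuclideanSpace.single i 1) (a, j, b) =
      if j = i ∧ b = mask i m then g i a else 0 := by
  choose ψ hψ using exists_Psi_single_eq hU hT
  refine ⟨fun i a => ψ i (a, i), fun i m a j b => ?_⟩
  rw [hψ, withRegister_apply]
  by_cases hj : j = i
  · subst hj
    by_cases hb : b = mask j m <;> simp [hb]
  · have := hZ i ∅ a j (mask i ∅) hj
    rw [hψ, withRegister_apply, if_pos rfl] at this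
    simp [hj, this]

lemma update_true_eq_of_condX {U : Fin (N + 1) → (H N d ≃ₗᵢ[ℂ] H N d)} {hd : 0 < d}
    (hX : CondX U hd) {g : Bits N → Fin d → ℂ}
    (hg : ∀ i m a j b, Psi U hd m (EuclideanSpace.single i 1) (a, j, b) =
      if j = i ∧ b = mask i m then g i a else 0)
    (i : Bits N) (k : Fin N) (hik : i k = false) : g (Function.update i k true) = g i := by
  funext a
  have hne : Function.update i k true ≠ i := fun h => by simpa [hik] using congrFun h k
  have h := hX ∅ k (Finset.notMem_empty k) i hik a i (fun _ => false : Bits N)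
  rw [← psiLinearMap_apply, map_smul, map_add] at h
  simp [psiLinearMap_apply, hg, hik, hne, hne.symm] at h
  exact h.symm

theorem protocol2_completely_robust_general (N d : ℕ) (hd : 0 < d)
    (U : Fin (N + 1) → (H N d ≃ₗᵢ[ℂ] H N d))
    (hU : ∀ t, ActsOnFirstTwo (U t))
    (hT : CondT U hd) (hZ : CondZ U hd) (hX : CondX U hd) :
    ∃ f : EuclideanSpace ℂ (Fin d),
      ‖f‖ = 1 ∧
      ∀ (φ : EuclideanSpace ℂ (Bits N)) (m : Finset (Fin N))
        (a : Fin d) (j b : Bits N),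
        Psi U hd m φ (a, j, b) = if b = mask j m then f a * φ j else 0 := by
  obtain ⟨g, hg⟩ := exists_Psi_single_apply hU hT hZ
  have hconst : ∀ i, g i = g fun _ => false :=
    apply_eq_apply_false_of_update_true (update_true_eq_of_condX hX hg)
  refine ⟨WithLp.toLp 2 (g fun _ => false), ?_, fun φ m a j b => ?_⟩
  · have hnorm : ‖Psi U hd ∅ (EuclideanSpace.single (fun _ => false : Bits N) 1)‖ = 1 := by
      rw [Psi, LinearIsometryEquiv.norm_map, init_single, withRegister_single,
        PiLp.norm_single, norm_one]
    rwa [EuclideanSpace.norm_eq_of_apply_eq_ite_s2 (f := WithLp.toLp 2 (g fun _ => false))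
      (c₀ := ((fun _ => false, fun _ => false) : Bits N × Bits N))
      fun a ⟨j, b⟩ => by simp [hg, Prod.ext_iff]] at hnorm
  · rw [Psi_eq_sum, WithLp.ofLp_sum, Finset.sum_apply]
    simp [hg, hconst, ite_and, mul_comm]

/-- **complete robustness of Protocol 2.** If `N ≥ 2` and an
attack satisfies the no-error conditions (T), (Z) and (X), then there is a unit
vector `f` of Eve's probe space such that for every input `φ` and every `m`,
the final state is `Ψ_m(φ) = Σ_i φ(i) · f ⊗ δ_i ⊗ δ_{i∧m}`: the coefficient of
`Ψ_m(φ)` at a basis index `(a,j,b)` is `f a * φ j` if `b = j∧m` and `0`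
otherwise.  In particular Eve's probe state `f` is independent of the state `φ`
sent by Alice and of Bob's choices `m`. -/
theorem protocol2_completely_robust (N d : ℕ) (hN : 2 ≤ N) (hd : 0 < d)
    (U : Fin (N + 1) → (H N d ≃ₗᵢ[ℂ] H N d))
    (hU : ∀ t, ActsOnFirstTwo (U t))
    (hT : CondT U hd) (hZ : CondZ U hd) (hX : CondX U hd) :
    ∃ f : EuclideanSpace ℂ (Fin d),
      ‖f‖ = 1 ∧
      ∀ (φ : EuclideanSpace ℂ (Bits N)) (m : Finset (Fin N))
        (a : Fin d) (j b : Bits N),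
        Psi U hd m φ (a, j, b) = if b = mask j m then f a * φ j else 0 :=
  protocol2_completely_robust_general N d hd U hU hT hZ hX

end SQKD2
end

section
/- For every n : ℕ and every real ε > 0, the number of bitstrings y : Fin n → Bool whose Hamming weight wt y satisfies |wt y / n − 1/2| > ε/2 is at most 2 · 2ⁿ · exp(−ε²·n/2). -/
/-!
Chernoff's method: a string whose signed sum `∑ c (y i)` exceeds `a` carries weight
`exp (∑ c (y i) - a) ≥ 1`, and the total weight of all strings factorizes as
`exp (-a) * (∑ b, exp (c b)) ^ n`. For `c = ±ε · toSign` the factor is `2 cosh ε ≤ 2 exp (ε² / 2)`,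
so with `a = ε² n` each of the two tails holds at most `2ⁿ exp (-ε² n / 2)` strings.
-/

def wt {n : ℕ} (y : Fin n → Bool) : ℕ := (Finset.univ.filter fun k => y k = true).card

open Finset Real

section Chernoff

variable {ι α : Type*} [Fintype ι] [DecidableEq ι] [Fintype α]

theorem sum_exp_sum_comp_eq_pow (c : α → ℝ) :
    ∑ y : ι → α, exp (∑ i, c (y i)) = (∑ b, exp (c b)) ^ Fintype.card ι := by
  simp only [exp_sum, ← Fintype.prod_sum (fun (_ : ι) b => exp (c b)), prod_const, card_univ]

theorem card_filter_lt_sum_comp_le (c : α → ℝ) (a : ℝ) :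
    (#{y : ι → α | a < ∑ i, c (y i)} : ℝ) ≤ exp (-a) * (∑ b, exp (c b)) ^ Fintype.card ι := by
  set S : Finset (ι → α) := {y | a < ∑ i, c (y i)}
  have hmarkov : ∀ y ∈ S, (1 : ℝ) ≤ exp (-a) * exp (∑ i, c (y i)) := fun y hy => by
    rw [← exp_add, one_le_exp_iff]
    linarith [(mem_filter.mp hy).2]
  rw [← sum_exp_sum_comp_eq_pow, mul_sum]
  calc (#S : ℝ)
      ≤ ∑ y ∈ S, exp (-a) * exp (∑ i, c (y i)) := by
        simpa using card_nsmul_le_sum _ _ _ hmarkov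
    _ ≤ ∑ y : ι → α, exp (-a) * exp (∑ i, c (y i)) :=
        sum_le_sum_of_subset_of_nonneg (subset_univ _) fun _ _ _ => by positivity

end Chernoff

def Bool.toSign (b : Bool) : ℝ := if b then 1 else -1

theorem sum_exp_mul_toSign_le (t : ℝ) : ∑ b : Bool, exp (t * b.toSign) ≤ 2 * exp (t ^ 2 / 2) := by
  have hcosh := cosh_le_exp_half_sq t
  rw [cosh_eq] at hcosh
  simp only [Fintype.sum_bool, Bool.toSign, if_true, Bool.false_eq_true, if_false, mul_one,
    mul_neg_one]
  linarith

theorem card_filter_lt_sum_mul_toSign_le {ι : Type*} [Fintype ι] [DecidableEq ι] (t a : ℝ) :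
    (#{y : ι → Bool | a < ∑ i, t * (y i).toSign} : ℝ) ≤
      2 ^ Fintype.card ι * exp (t ^ 2 * Fintype.card ι / 2 - a) :=
  calc (#{y : ι → Bool | a < ∑ i, t * (y i).toSign} : ℝ)
      ≤ exp (-a) * (∑ b : Bool, exp (t * b.toSign)) ^ Fintype.card ι :=
        card_filter_lt_sum_comp_le (fun b : Bool => t * b.toSign) a
    _ ≤ exp (-a) * (2 * exp (t ^ 2 / 2)) ^ Fintype.card ι := by
        gcongr
        exact sum_exp_mul_toSign_le t
    _ = 2 ^ Fintype.card ι * exp (t ^ 2 * Fintype.card ι / 2 - a) := by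
        rw [mul_pow, ← exp_nat_mul, mul_left_comm, ← exp_add]
        ring_nf

theorem sum_toSign_eq_two_mul_wt_sub {n : ℕ} (y : Fin n → Bool) :
    ∑ k, (y k).toSign = 2 * (wt y : ℝ) - n := by
  have hsign (b : Bool) : b.toSign = 2 * (if b = true then 1 else 0) - 1 := by
    cases b <;> norm_num [Bool.toSign]
  simp only [hsign, sum_sub_distrib, ← mul_sum, sum_boole, wt]
  simp

theorem filter_unbalanced_subset_union {n : ℕ} (hn : 0 < n) {ε : ℝ} (hε : 0 < ε) :
    ({y | ε / 2 < |(wt y : ℝ) / n - 1 / 2|} : Finset (Fin n → Bool)) ⊆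
      ({y | ε ^ 2 * n < ∑ k, ε * (y k).toSign} : Finset (Fin n → Bool)) ∪
        ({y | ε ^ 2 * n < ∑ k, -ε * (y k).toSign} : Finset (Fin n → Bool)) := by
  intro y hy
  replace hy := (mem_filter.mp hy).2
  have hn' : (0 : ℝ) < n := by exact_mod_cast hn
  have hdev : ε * n < |2 * (wt y : ℝ) - n| := by
    have heq : (wt y : ℝ) / n - 1 / 2 = (2 * (wt y : ℝ) - n) / (2 * n) := by field_simp
    rw [heq, abs_div, abs_of_pos (by positivity : (0 : ℝ) < 2 * n),
      lt_div_iff₀ (by positivity)] at hy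
    linarith
  simp only [mem_union, mem_filter, mem_univ, true_and, ← mul_sum, sum_toSign_eq_two_mul_wt_sub]
  rcases lt_abs.mp hdev with h | h
  · left; nlinarith
  · right; nlinarith

/-- **Hoeffding's inequality for `n` uniform bits, as a counting
bound.** For every `n` and every `ε > 0`, the number of `n`-bit strings whose
Hamming weight `w` satisfies `|w/n − 1/2| > ε/2` is at most
`2 · 2ⁿ · exp(−ε²n/2)`. -/
theorem count_unbalanced_bitstrings_le (n : ℕ) (ε : ℝ) (hε : 0 < ε) :
    ((Finset.univ.filter fun y : Fin n → Bool =>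
        ε / 2 < |((wt y : ℝ) / n) - 1 / 2|).card : ℝ) ≤
      2 * 2 ^ n * Real.exp (-(ε ^ 2) * n / 2) := by
  rcases Nat.eq_zero_or_pos n with rfl | hn
  · calc (#{y : Fin 0 → Bool | ε / 2 < |(wt y : ℝ) / (0 : ℕ) - 1 / 2|} : ℝ)
        ≤ Fintype.card (Fin 0 → Bool) := by exact_mod_cast card_le_univ _
      _ ≤ 2 * 2 ^ 0 * exp (-(ε ^ 2) * (0 : ℕ) / 2) := by norm_num
  have htail (t : ℝ) (ht : t ^ 2 = ε ^ 2) :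
      (#{y : Fin n → Bool | ε ^ 2 * n < ∑ k, t * (y k).toSign} : ℝ) ≤
        2 ^ n * exp (-(ε ^ 2) * n / 2) := by
    have h := card_filter_lt_sum_mul_toSign_le (ι := Fin n) t (ε ^ 2 * n)
    rwa [Fintype.card_fin, ht, show ε ^ 2 * n / 2 - ε ^ 2 * n = -(ε ^ 2) * n / 2 by ring] at h
  calc (#{y : Fin n → Bool | ε / 2 < |(wt y : ℝ) / n - 1 / 2|} : ℝ)
      ≤ #{y : Fin n → Bool | ε ^ 2 * n < ∑ k, ε * (y k).toSign} +
          #{y : Fin n → Bool | ε ^ 2 * n < ∑ k, -ε * (y k).toSign} := by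
        exact_mod_cast (card_le_card (filter_unbalanced_subset_union hn hε)).trans
          (card_union_le _ _)
    _ ≤ 2 * 2 ^ n * exp (-(ε ^ 2) * n / 2) := by
        linarith [htail ε rfl, htail (-ε) (neg_sq ε)]
end

section
/- Let n ≥ 1 be a natural number, let δ, δ' be real numbers with 0 ≤ δ' < δ, and set N = ⌈8n(1+δ)⌉. Then the lower tail of the binomial distribution with N trials and success probability 1/4 satisfies: Σ over k : ℕ, 0 ≤ k ≤ N with (k : ℝ) ≤ 2n(1+δ'), of binomial(N,k)·(1/4)^k·(3/4)^{N−k} ≤ exp(−(1/8)·((δ−δ')/(1+δ))²·n). -/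
/-!
Chernoff's method. For `t ≤ 0` the weights `exp (t (k - m))` are at least `1` on `k ≤ m`, so
the lower tail of `Bin(N, p)` is at most `exp (-t m) (p eᵗ + q)ᴺ ≤ exp (-t m + N p (eᵗ - 1))`.
With `eᵗ = m / μ`, `μ = N p`, the inequality `u log u ≥ (u² - 1) / 2` on `(0, 1]` turns the
exponent into `-(μ - m)² / (2μ)`. Here `μ ≥ 2n(1 + δ)` and `m = 2n(1 + δ')`, which gives
`n (δ - δ')² / (1 + δ)`, and `1 + δ ≥ 1` absorbs the remaining factor.
-/

open Finset Real

lemma sq_sub_one_div_two_le_mul_log {u : ℝ} (hu0 : 0 < u) (hu1 : u ≤ 1) :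
    (u ^ 2 - 1) / 2 ≤ u * log u := by
  have h : sinh (log u) ≤ log u := sinh_le_self_iff.mpr (log_nonpos hu0.le hu1)
  rw [sinh_log hu0] at h
  have := mul_le_mul_of_nonneg_left h hu0.le
  field_simp at this ⊢
  linarith

lemma add_pow_le_exp_mul_sub_one {p q x : ℝ} (hp : 0 ≤ p) (hq : 0 ≤ q) (hpq : p + q = 1)
    (hx : 0 ≤ x) (N : ℕ) : (p * x + q) ^ N ≤ exp (N * p * (x - 1)) := by
  have hbase : p * x + q ≤ exp (p * (x - 1)) := by
    linarith [add_one_le_exp (p * (x - 1))]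
  calc (p * x + q) ^ N ≤ exp (p * (x - 1)) ^ N := by gcongr
    _ = exp (N * p * (x - 1)) := by rw [← exp_nat_mul, mul_assoc]

lemma binomial_lower_tail_le_exp_mul_pow {p q : ℝ} (hp : 0 ≤ p) (hq : 0 ≤ q) (N : ℕ)
    (m : ℝ) {t : ℝ} (ht : t ≤ 0) :
    ∑ k ∈ (range (N + 1)).filter (fun k : ℕ => (k : ℝ) ≤ m),
        (N.choose k : ℝ) * p ^ k * q ^ (N - k) ≤
      exp (-t * m) * (p * exp t + q) ^ N := by
  calc ∑ k ∈ (range (N + 1)).filter (fun k : ℕ => (k : ℝ) ≤ m),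
        (N.choose k : ℝ) * p ^ k * q ^ (N - k)
      ≤ ∑ k ∈ (range (N + 1)).filter (fun k : ℕ => (k : ℝ) ≤ m),
        (N.choose k : ℝ) * p ^ k * q ^ (N - k) * exp (t * (k - m)) := by
        refine sum_le_sum fun k hk => le_mul_of_one_le_right (by positivity) ?_
        exact one_le_exp (mul_nonneg_of_nonpos_of_nonpos ht (by simpa using (mem_filter.mp hk).2))
    _ ≤ ∑ k ∈ range (N + 1), (N.choose k : ℝ) * p ^ k * q ^ (N - k) * exp (t * (k - m)) :=
        sum_le_sum_of_subset_of_nonneg (filter_subset _ _) fun _ _ _ => by positivity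
    _ = exp (-t * m) * (p * exp t + q) ^ N := by
        rw [add_pow, mul_sum]
        refine sum_congr rfl fun k _ => ?_
        rw [mul_pow, ← exp_nat_mul, show t * (k - m) = -t * m + k * t by ring, exp_add]
        ring

lemma neg_log_div_mul_add_mul_div_sub_one_le {m μ : ℝ} (hm : 0 < m) (hmμ : m ≤ μ) :
    -log (m / μ) * m + μ * (m / μ - 1) ≤ -((μ - m) ^ 2 / (2 * μ)) := by
  have hμ : 0 < μ := hm.trans_le hmμ
  set u := m / μ with hu
  have hmu : m = μ * u := by rw [hu]; field_simp
  have hkey := sq_sub_one_div_two_le_mul_log (div_pos hm hμ) ((div_le_one hμ).mpr hmμ)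
  rw [← hu] at hkey
  have : (μ - m) ^ 2 / (2 * μ) = μ * (u - 1) ^ 2 / 2 := by rw [hmu]; field_simp; ring
  rw [this, hmu]
  nlinarith [mul_le_mul_of_nonneg_left hkey hμ.le]

theorem binomial_lower_tail_le_exp {p q : ℝ} (hp : 0 ≤ p) (hq : 0 ≤ q) (hpq : p + q = 1)
    (N : ℕ) {m : ℝ} (hm : 0 < m) (hmμ : m ≤ N * p) :
    ∑ k ∈ (range (N + 1)).filter (fun k : ℕ => (k : ℝ) ≤ m),
        (N.choose k : ℝ) * p ^ k * q ^ (N - k) ≤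
      exp (-((N * p - m) ^ 2 / (2 * (N * p)))) := by
  have hμ : 0 < (N : ℝ) * p := hm.trans_le hmμ
  have hu : 0 < m / (N * p) := div_pos hm hμ
  have ht : log (m / (N * p)) ≤ 0 := log_nonpos hu.le ((div_le_one hμ).mpr hmμ)
  calc _ ≤ exp (-log (m / (N * p)) * m) * (p * exp (log (m / (N * p))) + q) ^ N :=
        binomial_lower_tail_le_exp_mul_pow hp hq N m ht
    _ ≤ exp (-log (m / (N * p)) * m) * exp (N * p * (m / (N * p) - 1)) := by
        rw [exp_log hu]
        gcongr
        exact add_pow_le_exp_mul_sub_one hp hq hpq hu.le N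
    _ ≤ _ := by
        rw [← exp_add]
        exact exp_le_exp.mpr (neg_log_div_mul_add_mul_div_sub_one_le hm hmμ)

lemma sq_sub_div_le_sq_sub_div_of_le {m a μ : ℝ} (hm : 0 ≤ m) (hma : m ≤ a) (haμ : a ≤ μ)
    (ha : 0 < a) : (a - m) ^ 2 / a ≤ (μ - m) ^ 2 / μ := by
  rw [div_le_div_iff₀ ha (ha.trans_le haμ)]
  -- the difference of the cross-multiplied sides is `(μ - a) (a μ - m²)`
  nlinarith [mul_nonneg (sub_nonneg.mpr haμ) (sub_nonneg.mpr (mul_le_mul hma (hma.trans haμ) hm ha.le))]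

/-- For `n ≥ 1`, `0 ≤ δ' < δ` and `N = ⌈8n(1+δ)⌉`, the lower
tail of the binomial distribution with `N` trials and success probability `1/4`
satisfies
`Σ_{0 ≤ k ≤ N, k ≤ 2n(1+δ')} C(N,k)·(1/4)^k·(3/4)^{N−k}
  ≤ exp(−(1/8)·((δ−δ')/(1+δ))²·n)`. -/
theorem sift_bits_lower_tail (n : ℕ) (hn : 1 ≤ n) (δ δ' : ℝ)
    (hδ'0 : 0 ≤ δ') (hδ : δ' < δ)
    (N : ℕ) (hN : N = ⌈8 * (n : ℝ) * (1 + δ)⌉₊) :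
    ∑ k ∈ (Finset.range (N + 1)).filter (fun k : ℕ => (k : ℝ) ≤ 2 * n * (1 + δ')),
        (N.choose k : ℝ) * (1 / 4) ^ k * (3 / 4) ^ (N - k) ≤
      Real.exp (-(1 / 8) * ((δ - δ') / (1 + δ)) ^ 2 * n) := by
  have hn0 : (0 : ℝ) < n := by exact_mod_cast hn
  have hm : 0 < 2 * n * (1 + δ') := by positivity
  have hδ0 : 0 < 1 + δ := by linarith
  have hma : 2 * n * (1 + δ') ≤ 2 * n * (1 + δ) := by gcongr
  have haμ : 2 * n * (1 + δ) ≤ N * (1 / 4 : ℝ) := by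
    have := Nat.le_ceil (8 * (n : ℝ) * (1 + δ))
    rw [← hN] at this
    linarith
  refine (binomial_lower_tail_le_exp (by norm_num) (by norm_num) (by norm_num) N hm
    (hma.trans haμ)).trans (exp_le_exp.mpr ?_)
  rw [div_mul_eq_div_div_swap, neg_mul, neg_mul, neg_le_neg_iff]
  calc 1 / 8 * ((δ - δ') / (1 + δ)) ^ 2 * n
      = n * (δ - δ') ^ 2 / (1 + δ) / (8 * (1 + δ)) := by field_simp
    _ ≤ n * (δ - δ') ^ 2 / (1 + δ) := div_le_self (by positivity) (by linarith)
    _ = (2 * n * (1 + δ) - 2 * n * (1 + δ')) ^ 2 / (2 * n * (1 + δ)) / 2 := by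
        field_simp; ring
    _ ≤ _ := by
        gcongr ?_ / 2
        exact sq_sub_div_le_sq_sub_div_of_le hm.le hma haμ (hm.trans_le hma)
end

section
/- Let h, n be natural numbers with n ≤ 2h, let E be a finite type with exactly 2h elements, let q : Fin n → E be injective, and let y : Fin n → Bool have Hamming weight w with n − h ≤ w and w ≤ h. Then the number of functions x : E → Bool that take the value true on exactly h elements and satisfy x(q p) = y p for all p : Fin n equals the binomial coefficient (2h − n choose h − w). -/
open Finset

def boolFunEquivFinset (α : Type*) [Fintype α] [DecidableEq α] : (α → Bool) ≃ Finset α where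
  toFun x := univ.filter fun a => x a = true
  invFun S a := decide (a ∈ S)
  left_inv x := by ext a; simp
  right_inv S := by ext a; simp

theorem card_finset_card_eq_inter_eq {α : Type*} [Fintype α] [DecidableEq α] {A B : Finset α}
    {k : ℕ} (hBA : B ⊆ A) (hBk : #B ≤ k) :
    Nat.card {S : Finset α // #S = k ∧ S ∩ A = B} = (#Aᶜ).choose (k - #B) := by
  have hdisj {T : Finset α} (hT : T ⊆ Aᶜ) : Disjoint T B :=
    disjoint_of_subset_right hBA (subset_compl_iff_disjoint_right.mp hT)
  let e : {S : Finset α // #S = k ∧ S ∩ A = B} ≃ {T // T ∈ powersetCard (k - #B) Aᶜ} :=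
    { toFun := fun S => ⟨S.1 \ B, by
        obtain ⟨S, hSk, hSA⟩ := S
        have hBS : B ⊆ S := hSA ▸ inter_subset_left
        refine mem_powersetCard.mpr ⟨fun a ha => ?_, by rw [card_sdiff_of_subset hBS, hSk]⟩
        obtain ⟨haS, haB⟩ := mem_sdiff.mp ha
        exact mem_compl.mpr fun haA => haB (hSA ▸ mem_inter_of_mem haS haA)⟩
      invFun := fun T => ⟨T.1 ∪ B, by
        obtain ⟨hTA, hTk⟩ := mem_powersetCard.mp T.2
        refine ⟨by rw [card_union_of_disjoint (hdisj hTA), hTk]; omega, ?_⟩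
        rw [union_inter_distrib_right, inter_eq_left.mpr hBA,
          disjoint_iff_inter_eq_empty.mp (subset_compl_iff_disjoint_right.mp hTA), empty_union]⟩
      left_inv := fun S => by
        obtain ⟨S, -, hSA⟩ := S
        exact Subtype.ext (sdiff_union_of_subset (hSA ▸ inter_subset_left))
      right_inv := fun T => Subtype.ext <|
        union_sdiff_cancel_right (hdisj (mem_powersetCard.mp T.2).1) }
  rw [Nat.card_congr e, Nat.card_eq_fintype_card, Fintype.card_coe, card_powersetCard]

theorem Function.Injective.inter_image_univ_eq_image_iff {ι E : Type*} [Fintype ι]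
    [DecidableEq E] {q : ι → E} (hq : Function.Injective q) (S : Finset E) (P : Finset ι) :
    S ∩ univ.image q = P.image q ↔ ∀ i, q i ∈ S ↔ i ∈ P := by
  constructor
  · intro hS i
    rw [← hq.mem_finset_image, ← hS, mem_inter, and_iff_left (mem_image_of_mem q (mem_univ i))]
  · intro hS
    ext e
    simp only [mem_inter, mem_image, mem_univ, true_and]
    constructor
    · rintro ⟨he, i, rfl⟩
      exact ⟨i, (hS i).mp he, rfl⟩
    · rintro ⟨i, hi, rfl⟩
      exact ⟨(hS i).mpr hi, i, rfl⟩

theorem card_balanced_extensions_general (h n : ℕ)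
    (E : Type) [Fintype E]
    (hE : Fintype.card E = 2 * h) (q : Fin n → E) (hq : Function.Injective q)
    (y : Fin n → Bool) (w : ℕ) (hwdef : w = wt y)
    (hw2 : w ≤ h) :
    Nat.card {x : E → Bool //
        (Finset.univ.filter fun e => x e = true).card = h ∧ ∀ p, x (q p) = y p} =
      (2 * h - n).choose (h - w) := by
  classical
  set B := (univ.filter fun p => y p = true).image q
  have hB : #B = w := by rw [card_image_of_injective _ hq, hwdef, wt]
  have hA : #(univ.image q)ᶜ = 2 * h - n := by
    rw [card_compl, card_image_of_injective _ hq, card_univ, Fintype.card_fin, hE]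
  have hx (x : E → Bool) : (∀ p, x (q p) = y p) ↔ boolFunEquivFinset E x ∩ univ.image q = B := by
    rw [hq.inter_image_univ_eq_image_iff]
    simp [boolFunEquivFinset, Bool.coe_iff_coe]
  calc _ = Nat.card {S : Finset E // #S = h ∧ S ∩ univ.image q = B} :=
        Nat.card_congr <| (boolFunEquivFinset E).subtypeEquiv fun x => and_congr Iff.rfl (hx x)
    _ = _ := by
      rw [card_finset_card_eq_inter_eq (image_subset_image (filter_subset _ _)) (hB ▸ hw2), hA, hB]

/-- Let `n ≤ 2h`, let `E` have exactly `2h` elements, let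
`q : Fin n → E` be injective, and let `y : Fin n → Bool` have Hamming weight
`w` with `n − h ≤ w ≤ h`.  Then the number of `x : E → Bool` taking the value
`true` on exactly `h` elements and satisfying `x ∘ q = y` is the binomial
coefficient `C(2h − n, h − w)`. -/
theorem card_balanced_extensions (h n : ℕ) (hn : n ≤ 2 * h)
    (E : Type) [Fintype E] [DecidableEq E]
    (hE : Fintype.card E = 2 * h) (q : Fin n → E) (hq : Function.Injective q)
    (y : Fin n → Bool) (w : ℕ) (hwdef : w = wt y)
    (hw1 : n - h ≤ w) (hw2 : w ≤ h) :
    Nat.card {x : E → Bool //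
        (Finset.univ.filter fun e => x e = true).card = h ∧ ∀ p, x (q p) = y p} =
      (2 * h - n).choose (h - w) :=
  card_balanced_extensions_general h n E hE q hq y w hwdef hw2
end

section
/- Let h, n be natural numbers with n ≤ 2h, let E be a finite type with exactly 2h elements, let q : Fin n → E be injective, and let y : Fin n → Bool have Hamming weight w with n − h ≤ w and w ≤ h. Then, summing over all x : E → Bool that take the value true on exactly h elements and satisfy x ∘ q = y, one has Σ_x 1/|Q(x,y)| = (2h choose h) · (2h−n)! / (2h)! (as real numbers). Consequently, when Alice picks such an x uniformly at random and then picks q uniformly among Q(x,y), every injective n-tuple q from E is announced with the same probability (2h−n)!/(2h)!, independently of y — so the announced indices leak no information about the INFO string y. -/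
/-!
Let `|E| = N`, let `y` have `w` ones among `n` positions, and let `x : E → Bool` have `k` ones.
An injection `f` with `x ∘ f = y` is the same as a pair of injections, from the ones of `y` into
the ones of `x` and from the zeros into the zeros, so `|Q(x,y)| = k^(w) (N-k)^(n-w)` (falling
factorials) does not depend on `x`. An admissible `x` is fixed on the image of `q` and free to
place its other `k - w` ones among the `N - n` remaining points, so there are `C(N-n, k-w)` of
them. The sum is therefore `C(N-n, k-w) / (k^(w) (N-k)^(n-w)) = (N-n)! / (k! (N-k)!)
= C(N,k) (N-n)! / N!`, in which `w` has cancelled.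
-/

open Finset Function Nat

def injectiveOverEquivFiberEmbedding {α β γ : Type*} (y : α → γ) (x : β → γ) :
    {f : α → β // Injective f ∧ ∀ a, x (f a) = y a} ≃
      ((c : γ) → {a // y a = c} ↪ {b // x b = c}) where
  toFun f c := ⟨fun a => ⟨f.1 a, (f.2.2 a).trans a.2⟩,
    fun _ _ h => Subtype.ext (f.2.1 (congrArg Subtype.val h))⟩
  invFun g :=
    let f := (Equiv.sigmaFiberEquiv y).symm.toEmbedding.trans
      ((Embedding.sigmaMap (Embedding.refl γ) g).trans (Equiv.sigmaFiberEquiv x).toEmbedding)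
    ⟨f, f.injective, fun a => (g (y a) ⟨a, rfl⟩).2⟩
  left_inv _ := rfl
  right_inv g := by
    funext c
    ext ⟨a, rfl⟩
    rfl

theorem natCard_injective_over {α β γ : Type*} [Finite α] [Finite β] [Fintype γ]
    (y : α → γ) (x : β → γ) :
    Nat.card {f : α → β // Injective f ∧ ∀ a, x (f a) = y a} =
      ∏ c, (Nat.card {b // x b = c}).descFactorial (Nat.card {a // y a = c}) := by
  have := Fintype.ofFinite α
  have := Fintype.ofFinite β
  classical
  rw [Nat.card_congr (injectiveOverEquivFiberEmbedding y x), Nat.card_pi]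
  simp only [Nat.card_eq_fintype_card, Fintype.card_embedding_eq]

theorem natCard_subtype_eq_false {α : Type*} [Fintype α] (f : α → Bool) :
    Nat.card {a // f a = false} = Fintype.card α - #{a | f a = true} := by
  rw [Nat.card_eq_fintype_card, Fintype.card_subtype, ← Finset.card_univ,
    ← card_filter_add_card_filter_not (s := univ) (fun a => f a = true)]
  simp

theorem card_extensions_with_card_true_eq_choose {α E : Type*} [Fintype α] [Fintype E]
    [DecidableEq E] {q : α → E} (hq : Injective q) (y : α → Bool) {k : ℕ}
    (hk : #{a | y a = true} ≤ k) :
    #{x : E → Bool | #{e | x e = true} = k ∧ ∀ a, x (q a) = y a} =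
      (Fintype.card E - Fintype.card α).choose (k - #{a | y a = true}) := by
  set A : Finset E := univ.image q
  set B : Finset E := image q {a | y a = true}
  have hA : #A = Fintype.card α := card_image_of_injective _ hq
  have hB : #B = #{a | y a = true} := card_image_of_injective _ hq
  have hBA : B ⊆ A := image_subset_image (subset_univ _)
  have hqA : ∀ a, q a ∈ A := fun a => mem_image_of_mem q (mem_univ a)
  have hqB : ∀ a, q a ∈ B ↔ y a = true := by simp [B, hq.eq_iff]
  have hinter_true : ∀ x : E → Bool, (∀ a, x (q a) = y a) →
      A ∩ ({e | x e = true} : Finset E) = B := by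
    intro x hx
    ext e
    simp only [A, B, mem_inter, mem_filter, mem_univ, true_and, mem_image]
    grind
  rw [← hA, ← hB, ← card_compl, ← card_powersetCard]
  -- `x` corresponds to its set of ones off `A`; conversely `T` is completed by the ones `B` of `y`.
  refine card_bij' (fun x _ => ({e | x e = true} : Finset E) \ A)
    (fun T _ e => decide (e ∈ T ∪ B)) ?_ ?_ ?_ ?_
  · intro x hx
    simp only [mem_filter, mem_univ, true_and] at hx
    refine mem_powersetCard.2 ⟨fun e he => mem_compl.2 (mem_sdiff.1 he).2, ?_⟩
    rw [card_sdiff, hinter_true x hx.2, hx.1]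
  · intro T hT
    obtain ⟨hTA, hTcard⟩ := mem_powersetCard.1 hT
    have hdisj : Disjoint T B :=
      disjoint_of_subset_right hBA (subset_compl_iff_disjoint_right.1 hTA)
    simp only [mem_filter, mem_univ, true_and, decide_eq_true_eq, filter_mem_eq_inter, univ_inter]
    refine ⟨by rw [card_union_of_disjoint hdisj]; omega, fun a => ?_⟩
    have hqT : q a ∉ T := fun h => mem_compl.1 (hTA h) (hqA a)
    simp [hqT, hqB]
  · intro x hx
    simp only [mem_filter, mem_univ, true_and] at hx
    funext e
    by_cases he : e ∈ A
    · obtain ⟨a, -, rfl⟩ := mem_image.1 he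
      simp [he, hqB, hx.2]
    · simp [he, show e ∉ B from fun h => he (hBA h)]
  · intro T hT
    have hTA := (mem_powersetCard.1 hT).1
    ext e
    simp only [mem_sdiff, mem_filter, mem_univ, true_and, decide_eq_true_eq, mem_union]
    grind [mem_compl]

theorem choose_div_descFactorial_mul_descFactorial {N k n w : ℕ} (hkN : k ≤ N) (hwk : w ≤ k)
    (hwn : w ≤ n) (hnw : n - w ≤ N - k) :
    ((N - n).choose (k - w) : ℝ) / (k.descFactorial w * (N - k).descFactorial (n - w)) =
      N.choose k * (N - n)! / N ! := by
  have hdesc : ∀ {m j : ℕ}, j ≤ m → (m.descFactorial j : ℝ) = m ! / (m - j)! := fun h =>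
    eq_div_of_mul_eq (by positivity)
      (by rw [mul_comm]; exact_mod_cast factorial_mul_descFactorial h)
  rw [cast_choose ℝ hkN, cast_choose ℝ (by omega : k - w ≤ N - n), hdesc hwk, hdesc hnw,
    show N - n - (k - w) = N - k - (n - w) by omega]
  field_simp

theorem sum_one_div_natCard_injective_over {α E : Type*} [Fintype α] [Fintype E]
    [DecidableEq E] {q : α → E} (hq : Injective q) (y : α → Bool) {k : ℕ}
    (hkE : k ≤ Fintype.card E) (hk : #{a | y a = true} ≤ k)
    (hnk : Fintype.card α - #{a | y a = true} ≤ Fintype.card E - k) :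
    ∑ x ∈ {x : E → Bool | #{e | x e = true} = k ∧ ∀ a, x (q a) = y a},
        (1 : ℝ) / Nat.card {f : α → E // Injective f ∧ ∀ a, x (f a) = y a} =
      (Fintype.card E).choose k * (Fintype.card E - Fintype.card α)! / (Fintype.card E)! := by
  set w := #{a | y a = true}
  have hw : w ≤ Fintype.card α := card_le_univ _
  have hcard : ∀ x : E → Bool, #{e | x e = true} = k →
      Nat.card {f : α → E // Injective f ∧ ∀ a, x (f a) = y a} =
        k.descFactorial w * (Fintype.card E - k).descFactorial (Fintype.card α - w) := by
    intro x hxk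
    rw [natCard_injective_over, Fintype.prod_bool, natCard_subtype_eq_false,
      natCard_subtype_eq_false, Nat.card_eq_fintype_card, Nat.card_eq_fintype_card,
      Fintype.card_subtype, Fintype.card_subtype, hxk]
  rw [sum_congr rfl fun x hx => by rw [hcard x (mem_filter.1 hx).2.1], sum_const,
    card_extensions_with_card_true_eq_choose hq y hk, nsmul_eq_mul, mul_one_div]
  push_cast
  exact choose_div_descFactorial_mul_descFactorial hkE hk hw hnk

theorem announced_indices_uniform_general (h n : ℕ)
    (E : Type) [Fintype E] [DecidableEq E]
    (hE : Fintype.card E = 2 * h) (q : Fin n → E) (hq : Function.Injective q)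
    (y : Fin n → Bool) (w : ℕ) (hwdef : w = wt y)
    (hw1 : n - h ≤ w) (hw2 : w ≤ h) :
    (∑ x ∈ Finset.univ.filter (fun x : E → Bool =>
        (Finset.univ.filter fun e => x e = true).card = h ∧ ∀ p, x (q p) = y p),
        (1 : ℝ) /
          (Nat.card {q' : Fin n → E // Function.Injective q' ∧ ∀ p, x (q' p) = y p})) =
      (((2 * h).choose h : ℕ) : ℝ) * (2 * h - n).factorial / (2 * h).factorial
    ∧
    (∑ x ∈ Finset.univ.filter (fun x : E → Bool =>
        (Finset.univ.filter fun e => x e = true).card = h ∧ ∀ p, x (q p) = y p),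
        (1 / (((2 * h).choose h : ℕ) : ℝ)) *
          (1 / (Nat.card {q' : Fin n → E // Function.Injective q' ∧ ∀ p, x (q' p) = y p}))) =
      ((2 * h - n).factorial : ℝ) / (2 * h).factorial := by
  subst hwdef
  have hsum := sum_one_div_natCard_injective_over hq y (k := h) (by omega) hw2
    (by rw [hE, Fintype.card_fin]; unfold wt at hw1; omega)
  rw [hE, Fintype.card_fin] at hsum
  have hchoose : ((2 * h).choose h : ℝ) ≠ 0 := Nat.cast_ne_zero.2 (Nat.choose_pos (by omega)).ne'
  -- Over `Fin n` the filter decides `∀ p` by `Nat.decidableForallFin`, not the generic instance.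
  refine (fun first => ⟨first, ?_⟩) (by convert hsum using 3)
  rw [← mul_sum, first]
  field_simp

/-- **Lemma 8 of the paper.** Let `n ≤ 2h`, let `E` have exactly
`2h` elements, let `q : Fin n → E` be injective, and let `y : Fin n → Bool`
have Hamming weight `w` with `n − h ≤ w ≤ h`.  Summing over the balanced
assignments `x : E → Bool` (exactly `h` values `true`) consistent with `q`
(`x ∘ q = y`), one has `Σ_x 1/|Q(x,y)| = C(2h,h) · (2h−n)! / (2h)!`.
Consequently, when Alice picks such an `x` uniformly at random (probability
`1/C(2h,h)` each) and then `q` uniformly in `Q(x,y)`, every injective `n`-tuple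
`q` is announced with the same probability `(2h−n)!/(2h)!`, independently of
`y` — the announced indices leak no information about the INFO string `y`. -/
theorem announced_indices_uniform (h n : ℕ) (hn : n ≤ 2 * h)
    (E : Type) [Fintype E] [DecidableEq E]
    (hE : Fintype.card E = 2 * h) (q : Fin n → E) (hq : Function.Injective q)
    (y : Fin n → Bool) (w : ℕ) (hwdef : w = wt y)
    (hw1 : n - h ≤ w) (hw2 : w ≤ h) :
    (∑ x ∈ Finset.univ.filter (fun x : E → Bool =>
        (Finset.univ.filter fun e => x e = true).card = h ∧ ∀ p, x (q p) = y p),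
        (1 : ℝ) /
          (Nat.card {q' : Fin n → E // Function.Injective q' ∧ ∀ p, x (q' p) = y p})) =
      (((2 * h).choose h : ℕ) : ℝ) * (2 * h - n).factorial / (2 * h).factorial
    ∧
    (∑ x ∈ Finset.univ.filter (fun x : E → Bool =>
        (Finset.univ.filter fun e => x e = true).card = h ∧ ∀ p, x (q p) = y p),
        (1 / (((2 * h).choose h : ℕ) : ℝ)) *
          (1 / (Nat.card {q' : Fin n → E // Function.Injective q' ∧ ∀ p, x (q' p) = y p}))) =
      ((2 * h - n).factorial : ℝ) / (2 * h).factorial :=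
  announced_indices_uniform_general h n E hE q hq y w hwdef hw1 hw2
end

section
/- Let N be a natural number, let E ⊆ F be finite sets of indices in Fin N, and let w : (Fin N → Bool) → ℝ be a function such that w i = w i' whenever the restrictions of i and i' to F have equal Hamming weight (equal number of positions k ∈ F with value true). Then for any two assignments x, x' : E → Bool with equal Hamming weight on E, Σ over bitstrings i with i k = x k for all k ∈ E, of w i, equals Σ over bitstrings i with i k = x' k for all k ∈ E, of w i. -/
/-!
Since `x` and `x'` take the value `true` equally often, they differ by a permutation `σ` of `E`.
Extended by the identity outside `E ⊆ F`, `σ` becomes a permutation `τ` of `Fin N` that preserves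
`F`, so precomposition with `τ` leaves the Hamming weight on `F`, hence `w`, unchanged, while
it maps the bitstrings extending `x'` onto those extending `x`.
-/

open Finset Equiv

theorem exists_perm_apply_eq_of_card_filter_true_eq {α : Type*} [Fintype α] {f g : α → Bool}
    (h : #{a | f a = true} = #{a | g a = true}) : ∃ σ : Perm α, ∀ a, g (σ a) = f a := by
  have htrue : Fintype.card {a // f a = true} = Fintype.card {a // g a = true} := by
    simpa only [Fintype.card_subtype] using h
  have hfiber : ∀ b, Fintype.card {a // f a = b} = Fintype.card {a // g a = b}
    | true => htrue
    | false => by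
      simp only [← Bool.not_eq_true, Fintype.card_subtype_compl, htrue]
  exact ⟨ofFiberEquiv fun b => Fintype.equivOfCardEq (hfiber b), ofFiberEquiv_map _⟩

theorem Equiv.Perm.ofSubtype_apply_mem_iff_mem_of_le {α : Type*} {p q : α → Prop}
    [DecidablePred p] (hpq : p ≤ q) (σ : Perm (Subtype p)) (a : α) :
    q (Perm.ofSubtype σ a) ↔ q a := by
  by_cases ha : p a
  · exact iff_of_true (hpq _ ((Perm.ofSubtype_apply_mem_iff_mem σ a).2 ha)) (hpq a ha)
  · rw [Perm.ofSubtype_apply_of_not_mem σ ha]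

theorem Finset.card_filter_comp_perm {α : Type*} (p : α → Prop) [DecidablePred p]
    (s : Finset α) (τ : Perm α) (hs : ∀ a, τ a ∈ s ↔ a ∈ s) :
    #{a ∈ s | p (τ a)} = #{a ∈ s | p a} :=
  card_nbij' τ τ.symm
    (fun a ha => by simp_all)
    (fun a ha => by simp_all [← hs (τ.symm a)])
    (fun a _ => τ.symm_apply_apply a) (fun a _ => τ.apply_symm_apply a)

theorem Finset.sum_filter_comp_perm {ι β M : Type*} [Fintype ι] [DecidableEq ι] [Fintype β]
    [AddCommMonoid M] (τ : Perm ι) (w : (ι → β) → M) (hw : ∀ i, w (i ∘ τ) = w i)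
    (P : (ι → β) → Prop) [DecidablePred P] :
    ∑ i with P (i ∘ τ), w i = ∑ i with P i, w i :=
  sum_equiv (τ.symm.arrowCongr (Equiv.refl β)) (by simp [Equiv.arrowCongr, Function.comp_def])
    fun i _ => (hw i).symm

/-- **Lemma 7 of the paper.** Let `E ⊆ F` be finite sets of
indices in `Fin N` and let `w` be a weight function on bitstrings that depends
only on the Hamming weight of the restriction to `F`.  Then for any two
assignments `x, x' : E → Bool` with equal Hamming weight on `E`, the total
weight of the bitstrings extending `x` equals the total weight of the
bitstrings extending `x'`. -/
theorem balanced_assignments_equally_likely (N : ℕ) (E F : Finset (Fin N))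
    (hEF : E ⊆ F) (w : (Fin N → Bool) → ℝ)
    (hw : ∀ i i' : Fin N → Bool,
      (F.filter fun k => i k = true).card = (F.filter fun k => i' k = true).card →
      w i = w i')
    (x x' : E → Bool)
    (hxx' : (Finset.univ.filter fun e : E => x e = true).card =
            (Finset.univ.filter fun e : E => x' e = true).card) :
    ∑ i ∈ Finset.univ.filter
        (fun i : Fin N → Bool => ∀ k (hk : k ∈ E), i k = x ⟨k, hk⟩), w i =
    ∑ i ∈ Finset.univ.filter
        (fun i : Fin N → Bool => ∀ k (hk : k ∈ E), i k = x' ⟨k, hk⟩), w i := by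
  obtain ⟨σ, hσ⟩ := exists_perm_apply_eq_of_card_filter_true_eq hxx'.symm
  set τ : Perm (Fin N) := Perm.ofSubtype σ
  have hτF : ∀ k, τ k ∈ F ↔ k ∈ F :=
    Perm.ofSubtype_apply_mem_iff_mem_of_le (fun _ hk => hEF hk) σ
  have hwτ : ∀ i : Fin N → Bool, w (i ∘ τ) = w i := fun i =>
    hw _ _ (card_filter_comp_perm (fun k => i k = true) F τ hτF)
  refine .trans (sum_congr (filter_congr fun i _ => ?_) fun _ _ => rfl)
    (sum_filter_comp_perm τ w hwτ _)
  calc (∀ k (hk : k ∈ E), i k = x ⟨k, hk⟩)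
      ↔ ∀ e : E, i e = x e := (Subtype.forall (q := fun e : E => i e = x e)).symm
    _ ↔ ∀ e : E, i (σ e) = x (σ e) := σ.forall_congr_right.symm
    _ ↔ ∀ e : E, (i ∘ τ) e = x' e := by
      simp only [Function.comp_apply, τ, Perm.ofSubtype_apply_coe, hσ]
    _ ↔ ∀ k (hk : k ∈ E), (i ∘ τ) k = x' ⟨k, hk⟩ :=
      Subtype.forall (q := fun e : E => (i ∘ τ) e = x' e)
end
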